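/- arXiv:2512.20811 — 2 statements merged into one kernel-verified Lean document; each statement's English description precedes it below -/
import Mathlib

section
/- Let N be a positive integer, let t, c : Fin N → ℝ be binary vectors (all entries in {0,1}), and let S : Fin N → ℝ be a weight vector with S i > 0 for all i. Assume the four quantities ⟨t,1⟩_S, ⟨1,c⟩_S, ⟨1−t,1⟩_S, ⟨1,1−c⟩_S are all strictly positive (equivalently, neither t nor c is the all-zeros or the all-ones vector). Then −1 ≤ MCC_S(t,c) ≤ 1. -/
/-- Weighted inner product `⟨a,b⟩_S = ∑ i, S i * a i * b i`. -/
noncomputable def wip {N : ℕ} (S a b : Fin N → ℝ) : ℝ := ∑ i, S i * a i * b i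

/-- Weighted Matthews correlation coefficient. -/
noncomputable def MCC {N : ℕ} (S t c : Fin N → ℝ) : ℝ :=
  (wip S t c * wip S 1 1 - wip S t 1 * wip S 1 c) /
    Real.sqrt (wip S t 1 * wip S 1 c * wip S (1 - t) 1 * wip S 1 (1 - c))

theorem mcc_mem_Icc {N : ℕ} (hN : 0 < N) (t c S : Fin N → ℝ)
    (ht : ∀ i, t i = 0 ∨ t i = 1) (hc : ∀ i, c i = 0 ∨ c i = 1)
    (hS : ∀ i, 0 < S i)
    (h1 : 0 < wip S t 1) (h2 : 0 < wip S 1 c)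
    (h3 : 0 < wip S (1 - t) 1) (h4 : 0 < wip S 1 (1 - c)) :
    -1 ≤ MCC S t c ∧ MCC S t c ≤ 1 := by
  set W := wip S 1 1 with hW
  set T := wip S t 1 with hT
  set C := wip S 1 c with hC
  set P := wip S t c with hP
  have hWeq : wip S (1 - t) 1 = W - T := by
    simp only [wip, hW, hT, ← Finset.sum_sub_distrib]
    apply Finset.sum_congr rfl; intro i _
    simp [Pi.sub_apply]; ring
  have hWeq' : wip S 1 (1 - c) = W - C := by
    simp only [wip, hW, hC, ← Finset.sum_sub_distrib]
    apply Finset.sum_congr rfl; intro i _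
    simp [Pi.sub_apply]; ring
  have hWT : 0 < W - T := hWeq ▸ h3
  have hWC : 0 < W - C := hWeq' ▸ h4
  have hWpos : 0 < W := by linarith
  -- Cauchy-Schwarz with f i = √(S i) * (W * t i - T), g i = √(S i) * (W * c i - C)
  have key := Finset.sum_mul_sq_le_sq_mul_sq Finset.univ
      (fun i => Real.sqrt (S i) * (W * t i - T))
      (fun i => Real.sqrt (S i) * (W * c i - C))
  have hsq : ∀ i, Real.sqrt (S i) * Real.sqrt (S i) = S i :=
    fun i => Real.mul_self_sqrt (hS i).le
  have htt : wip S t t = T := by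
    apply Finset.sum_congr rfl; intro i _
    rcases ht i with h | h <;> simp [h]
  have hcc : wip S c c = C := by
    show (∑ i, S i * c i * c i) = ∑ i, S i * 1 * c i
    apply Finset.sum_congr rfl; intro i _
    rcases hc i with h | h <;> simp [h]
  have e1 : ∑ i, (Real.sqrt (S i) * (W * t i - T)) * (Real.sqrt (S i) * (W * c i - C))
      = W * (P * W - T * C) := by
    have : ∀ i ∈ Finset.univ, (Real.sqrt (S i) * (W * t i - T)) * (Real.sqrt (S i) * (W * c i - C))
        = W^2 * (S i * t i * c i) - W * C * (S i * t i * 1) - W * T * (S i * 1 * c i)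
          + T * C * (S i * 1 * 1) := by
      intro i _
      have h := hsq i
      calc (Real.sqrt (S i) * (W * t i - T)) * (Real.sqrt (S i) * (W * c i - C))
          = (Real.sqrt (S i) * Real.sqrt (S i)) * ((W * t i - T) * (W * c i - C)) := by ring
        _ = _ := by rw [h]; ring
    rw [Finset.sum_congr rfl this]
    simp only [Finset.sum_add_distrib, Finset.sum_sub_distrib, ← Finset.mul_sum]
    show W^2 * P - W * C * T - W * T * C + T * C * W = W * (P * W - T * C)
    ring
  have e2 : ∑ i, (Real.sqrt (S i) * (W * t i - T))^2 = W * (T * (W - T)) := by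
    have : ∀ i ∈ Finset.univ, (Real.sqrt (S i) * (W * t i - T))^2
        = W^2 * (S i * t i * t i) - 2 * W * T * (S i * t i * 1) + T^2 * (S i * 1 * 1) := by
      intro i _
      have h := hsq i
      calc (Real.sqrt (S i) * (W * t i - T))^2
          = (Real.sqrt (S i) * Real.sqrt (S i)) * ((W * t i - T)^2) := by ring
        _ = _ := by rw [h]; ring
    rw [Finset.sum_congr rfl this]
    simp only [Finset.sum_add_distrib, Finset.sum_sub_distrib, ← Finset.mul_sum]
    show W^2 * wip S t t - 2 * W * T * T + T^2 * W = W * (T * (W - T))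
    rw [htt]; ring
  have e3 : ∑ i, (Real.sqrt (S i) * (W * c i - C))^2 = W * (C * (W - C)) := by
    have : ∀ i ∈ Finset.univ, (Real.sqrt (S i) * (W * c i - C))^2
        = W^2 * (S i * c i * c i) - 2 * W * C * (S i * 1 * c i) + C^2 * (S i * 1 * 1) := by
      intro i _
      have h := hsq i
      calc (Real.sqrt (S i) * (W * c i - C))^2
          = (Real.sqrt (S i) * Real.sqrt (S i)) * ((W * c i - C)^2) := by ring
        _ = _ := by rw [h]; ring
    rw [Finset.sum_congr rfl this]
    simp only [Finset.sum_add_distrib, Finset.sum_sub_distrib, ← Finset.mul_sum]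
    show W^2 * wip S c c - 2 * W * C * C + C^2 * W = W * (C * (W - C))
    rw [hcc]; ring
  rw [e1, e2, e3] at key
  -- key : (W * (P*W - T*C))^2 ≤ (W * (T*(W-T))) * (W * (C*(W-C)))
  have hnum : (P * W - T * C)^2 ≤ T * C * (W - T) * (W - C) := by
    have key' : W^2 * ((P * W - T * C)^2) ≤ W^2 * (T * C * (W - T) * (W - C)) := by
      rw [show W^2 * ((P * W - T * C)^2) = (W * (P * W - T * C))^2 from by ring,
          show W^2 * (T * C * (W - T) * (W - C)) = W * (T * (W - T)) * (W * (C * (W - C))) from by ring]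
      exact key
    exact le_of_mul_le_mul_left key' (by positivity)
  set D := T * C * (W - T) * (W - C) with hD
  have hDpos : 0 < D := by positivity
  have hsqrtD : 0 < Real.sqrt D := Real.sqrt_pos.mpr hDpos
  have habs : |P * W - T * C| ≤ Real.sqrt D := by
    rw [← Real.sqrt_sq_eq_abs]
    exact Real.sqrt_le_sqrt hnum
  have hMCC : MCC S t c = (P * W - T * C) / Real.sqrt D := by
    unfold MCC
    rw [hWeq, hWeq']
  rw [hMCC]
  rw [abs_le] at habs
  constructor
  · rw [le_div_iff₀ hsqrtD]; linarith [habs.1]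
  · rw [div_le_one hsqrtD]; exact habs.2
end

section
/- Let x and ε be real numbers with x > 0 and 0 < ε < x/2. Then for both choices of sign, √2·ε/(3x·√(3x)) < |1/√x − 1/√(x ± ε)| < √2·ε/(x·√x). -/
set_option maxHeartbeats 1000000


theorem inv_sqrt_perturb_bounds (x ε : ℝ) (hx : 0 < x) (hε0 : 0 < ε) (hε : ε < x / 2) :
    (Real.sqrt 2 * ε / (3 * x * Real.sqrt (3 * x)) <
        |1 / Real.sqrt x - 1 / Real.sqrt (x + ε)| ∧
      |1 / Real.sqrt x - 1 / Real.sqrt (x + ε)| < Real.sqrt 2 * ε / (x * Real.sqrt x)) ∧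
    (Real.sqrt 2 * ε / (3 * x * Real.sqrt (3 * x)) <
        |1 / Real.sqrt x - 1 / Real.sqrt (x - ε)| ∧
      |1 / Real.sqrt x - 1 / Real.sqrt (x - ε)| < Real.sqrt 2 * ε / (x * Real.sqrt x)) := by
  have hxε : 0 < x + ε := by linarith
  have hxe' : 0 < x - ε := by linarith
  set s := Real.sqrt x with hsdef
  set t := Real.sqrt (x + ε) with htdef
  set u := Real.sqrt (x - ε) with hudef
  have hs : 0 < s := Real.sqrt_pos.mpr hx
  have ht : 0 < t := Real.sqrt_pos.mpr hxε
  have hu : 0 < u := Real.sqrt_pos.mpr hxe'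
  have hs2 : s ^ 2 = x := Real.sq_sqrt hx.le
  have ht2 : t ^ 2 = x + ε := Real.sq_sqrt hxε.le
  have hu2 : u ^ 2 = x - ε := Real.sq_sqrt hxe'.le
  have h2 : (0:ℝ) < Real.sqrt 2 := Real.sqrt_pos.mpr (by norm_num)
  have h22 : Real.sqrt 2 ^ 2 = 2 := Real.sq_sqrt (by norm_num)
  have h3 : (0:ℝ) < Real.sqrt 3 := Real.sqrt_pos.mpr (by norm_num)
  have h32 : Real.sqrt 3 ^ 2 = 3 := Real.sq_sqrt (by norm_num)
  have h3x : Real.sqrt (3 * x) = Real.sqrt 3 * s := Real.sqrt_mul (by norm_num) x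
  have hst : s < t := Real.sqrt_lt_sqrt hx.le (by linarith)
  have hus : u < s := Real.sqrt_lt_sqrt hxe'.le (by linarith)
  have e1 : 1 / s - 1 / t = ε / (s * t * (s + t)) := by
    rw [eq_div_iff (by positivity)]
    have h : (1 / s - 1 / t) * (s * t * (s + t)) = t ^ 2 - s ^ 2 := by
      field_simp; ring
    rw [h, ht2, hs2]; ring
  have e2 : 1 / u - 1 / s = ε / (s * u * (s + u)) := by
    rw [eq_div_iff (by positivity)]
    have h : (1 / u - 1 / s) * (s * u * (s + u)) = s ^ 2 - u ^ 2 := by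
      field_simp; ring
    rw [h, hu2, hs2]; ring
  have a1 : |1 / s - 1 / t| = ε / (s * t * (s + t)) := by
    rw [abs_of_pos, e1]
    have : 1 / t < 1 / s := one_div_lt_one_div_of_lt hs hst
    linarith
  have a2 : |1 / s - 1 / u| = ε / (s * u * (s + u)) := by
    rw [abs_sub_comm, abs_of_pos, e2]
    have : 1 / s < 1 / u := one_div_lt_one_div_of_lt hu hus
    linarith
  rw [h3x, a1, a2, ← hs2]
  have h2t : 2 * t ^ 2 < 3 * s ^ 2 := by nlinarith
  have h2u : s ^ 2 < 2 * u ^ 2 := by nlinarith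
  have hεs : 0 < ε * s := mul_pos hε0 hs
  have hk1 : Real.sqrt 2 * t < Real.sqrt 3 * s := by
    have ha : Real.sqrt 2 * t = Real.sqrt (2 * t ^ 2) := by
      rw [Real.sqrt_mul (by norm_num), Real.sqrt_sq ht.le]
    have hb : Real.sqrt 3 * s = Real.sqrt (3 * s ^ 2) := by
      rw [Real.sqrt_mul (by norm_num), Real.sqrt_sq hs.le]
    rw [ha, hb]
    exact Real.sqrt_lt_sqrt (by positivity) h2t
  have hk2 : s < Real.sqrt 2 * u := by
    have ha : Real.sqrt 2 * u = Real.sqrt (2 * u ^ 2) := by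
      rw [Real.sqrt_mul (by norm_num), Real.sqrt_sq hu.le]
    have hb : s = Real.sqrt (s ^ 2) := (Real.sqrt_sq hs.le).symm
    rw [ha]
    nth_rewrite 1 [hb]
    exact Real.sqrt_lt_sqrt (by positivity) h2u
  have hb1 : Real.sqrt 2 * (t * (s + t)) < 3 * Real.sqrt 3 * s ^ 2 := by
    nlinarith [hk1, h2t, h22, h32, mul_pos h2 ht, mul_pos h3 hs, mul_pos hs ht,
      mul_lt_mul_of_pos_right hk1 hs, mul_lt_mul_of_pos_right hk1 ht]
  have hb2 : s ^ 2 < Real.sqrt 2 * (t * (s + t)) := by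
    nlinarith [h22, h2, hst, mul_pos hs ht, sq_nonneg (Real.sqrt 2 - 1), mul_pos hs hs]
  have hb3 : Real.sqrt 2 * (u * (s + u)) < 3 * Real.sqrt 3 * s ^ 2 := by
    nlinarith [h22, h32, h2, h3, hus, mul_pos hs hu, mul_pos h2 hu,
      mul_pos h3 hs, mul_pos hs hs, sq_nonneg (Real.sqrt 2 - 3/2), sq_nonneg (Real.sqrt 3 - 7/4)]
  have hb4 : s ^ 2 < Real.sqrt 2 * (u * (s + u)) := by
    nlinarith [hk2, mul_pos hs hu, mul_lt_mul_of_pos_right hk2 (add_pos hs hu), mul_pos hu hu]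
  refine ⟨⟨?_, ?_⟩, ?_, ?_⟩
  · rw [div_lt_div_iff₀ (by positivity) (by positivity)]
    nlinarith [mul_lt_mul_of_pos_left hb1 hεs]
  · rw [div_lt_div_iff₀ (by positivity) (by positivity)]
    nlinarith [mul_lt_mul_of_pos_left hb2 hεs]
  · rw [div_lt_div_iff₀ (by positivity) (by positivity)]
    nlinarith [mul_lt_mul_of_pos_left hb3 hεs]
  · rw [div_lt_div_iff₀ (by positivity) (by positivity)]
    nlinarith [mul_lt_mul_of_pos_left hb4 hεs]
end
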